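/- arXiv:2407.03515 — 4 statements merged into one kernel-verified Lean document; each statement's English description precedes it below -/
import Mathlib

section
/- For nonnegative integers p, n, f with 1 ≤ n ≤ p and f ≤ n-1, the sum over k from 0 to p-n of C(p-n, k) / (p * C(p-1, f+k)) equals 1 / (n * C(n-1, f)), where the division is over the rationals. -/
/-!
`betaNat q j = 1 / ((q + 1) * C(q, j))` is the Beta integral `∫₀¹ x ^ j (1 - x) ^ (q - j) dx`.
Splitting the integrand along `1 = x + (1 - x)` gives the Pascal-type recurrence
`betaNat q j = betaNat (q + 1) j + betaNat (q + 1) (j + 1)`, and iterating it `m` times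
expands `betaNat q j` as `∑ₖ C(m, k) betaNat (q + m) (j + k)`. With `q = n - 1`, `j = f` and
`m = p - n` this is the claimed identity.
-/

open Finset

section

variable {K : Type*} [Field K] [CharZero K]

variable (K) in
def betaNat (q j : ℕ) : K := ((q + 1 : K) * q.choose j)⁻¹

/-- Both `C(q + 1, j)` and `C(q + 1, j + 1)` are rational multiples of `C(q, j)`, and the two
reciprocals add up to `((q + 1 - j) + (j + 1)) / ((q + 2) (q + 1) C(q, j))`. -/
theorem betaNat_eq_succ_add_succ {q j : ℕ} (hj : j ≤ q) :
    betaNat K q j = betaNat K (q + 1) j + betaNat K (q + 1) (j + 1) := by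
  have hc : (q.choose j : K) ≠ 0 := Nat.cast_ne_zero.mpr (Nat.choose_pos hj).ne'
  have hq2 : (q + 1 + 1 : K) ≠ 0 := mod_cast (q + 1).succ_ne_zero
  have hqj : (q + 1 - j : K) ≠ 0 := by
    rw [← Nat.cast_succ, ← Nat.cast_sub (by omega)]
    exact_mod_cast (by omega : q + 1 - j ≠ 0)
  have hlow : ((q + 1).choose j : K) = q.choose j * (q + 1) / (q + 1 - j) := by
    rw [eq_div_iff hqj]
    have := congrArg (Nat.cast (R := K)) (Nat.choose_mul_succ_eq q j)
    push_cast [Nat.cast_sub (show j ≤ q + 1 by omega)] at this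
    exact this.symm
  have hhigh : ((q + 1).choose (j + 1) : K) = (q + 1) * q.choose j / (j + 1) := by
    rw [eq_div_iff (Nat.cast_add_one_ne_zero j)]
    exact_mod_cast (Nat.add_one_mul_choose_eq q j).symm
  simp only [betaNat, Nat.cast_succ, hlow, hhigh]
  field_simp
  ring

theorem sum_choose_mul_betaNat_add {q j : ℕ} (hj : j ≤ q) (m : ℕ) :
    ∑ k ∈ range (m + 1), (m.choose k : K) * betaNat K (q + m) (j + k) = betaNat K q j := by
  induction m with
  | zero => simp
  | succ m ih =>
    have pascal := sum_choose_succ_mul (fun i _ ↦ betaNat K (q + m + 1) (j + i)) m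
    calc ∑ k ∈ range (m + 1 + 1), ((m + 1).choose k : K) * betaNat K (q + (m + 1)) (j + k)
        = ∑ i ∈ range (m + 1), (m.choose i : K) *
            (betaNat K (q + m + 1) (j + i) + betaNat K (q + m + 1) (j + i + 1)) := by
          simp only [mul_add, sum_add_distrib, ← add_assoc] at pascal ⊢
          exact pascal
      _ = ∑ i ∈ range (m + 1), (m.choose i : K) * betaNat K (q + m) (j + i) := by
          refine sum_congr rfl fun i hi ↦ ?_
          rw [betaNat_eq_succ_add_succ (q := q + m) (j := j + i) (by rw [mem_range] at hi; omega)]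
      _ = betaNat K q j := ih

end

theorem qshap_prop1 (p n f : ℕ) (hn : 1 ≤ n) (hnp : n ≤ p) (hf : f ≤ n - 1) :
    ∑ k ∈ Finset.range (p - n + 1),
      ((p - n).choose k : ℚ) / (p * (p - 1).choose (f + k))
      = 1 / (n * (n - 1).choose f) := by
  have hp : n - 1 + (p - n) = p - 1 := by omega
  have hcast : ∀ r : ℕ, 1 ≤ r → ((r - 1 : ℕ) + 1 : ℚ) = r := fun r hr ↦ by
    rw [Nat.cast_sub hr]; ring
  have key := sum_choose_mul_betaNat_add (K := ℚ) hf (p - n)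
  simp only [betaNat, hp, hcast n hn, hcast p (hn.trans hnp)] at key
  simpa only [div_eq_mul_inv, one_mul] using key
end

section
/- For nonnegative integers f and k, C(f+k, k) * C(k, k) = C(f+k, f); more generally, in the proof of the Gould identity, for integers p, n, f, k with the constraints 0 ≤ k ≤ p-n, the summand C(f+k,k)*C(p-1-f-k, p-n-k) can be rewritten so that the sum is independent of f: the sum over k from 0 to p-n of C(f+k,k)*C(p-1-f-k,p-n-k) is independent of f for 0 ≤ f ≤ n-1. -/
/-! Since `∑ₙ C(d + n, d) Xⁿ = (1 - X)⁻⁽ᵈ⁺¹⁾`, comparing coefficients of `Xᵐ` in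
`(1 - X)⁻⁽ᵃ⁺¹⁾ (1 - X)⁻⁽ᵇ⁺¹⁾ = (1 - X)⁻⁽ᵃ⁺ᵇ⁺²⁾` gives
`∑_{i+j=m} C(a+i, a) C(b+j, b) = C(a+b+1+m, a+b+1)`.
With `a = f`, `b = n-1-f`, `m = p-n` the sum in question is therefore `C(p, n)` for every
`f ≤ n - 1`. -/

open Finset PowerSeries

theorem Nat.sum_antidiagonal_add_choose_mul_add_choose (a b m : ℕ) :
    ∑ ij ∈ antidiagonal m, (a + ij.1).choose a * (b + ij.2).choose b
      = (a + b + 1 + m).choose (a + b + 1) := by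
  have h := congrArg (fun φ : ℤ⟦X⟧ˣ => coeff m φ.val) (invOneSubPow_add ℤ (a + 1) (b + 1))
  simp only [Units.val_mul, coeff_mul, show a + 1 + (b + 1) = a + b + 1 + 1 by ring,
    invOneSubPow_val_succ_eq_mk_add_choose, coeff_mk] at h
  exact_mod_cast h.symm

theorem Nat.sum_range_add_choose_mul_add_choose (a b m : ℕ) :
    ∑ k ∈ range (m + 1), (a + k).choose a * (b + (m - k)).choose b
      = (a + b + 1 + m).choose (a + b + 1) := by
  rw [← Nat.sum_antidiagonal_eq_sum_range_succ (fun i j => (a + i).choose a * (b + j).choose b)]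
  exact Nat.sum_antidiagonal_add_choose_mul_add_choose a b m

theorem gould_sum_eq_choose {p n f : ℕ} (hn : 1 ≤ n) (hnp : n ≤ p) (hf : f ≤ n - 1) :
    ∑ k ∈ range (p - n + 1), (f + k).choose k * (p - 1 - f - k).choose (p - n - k)
      = p.choose n := by
  have hsummand : ∀ k ∈ range (p - n + 1), (f + k).choose k * (p - 1 - f - k).choose (p - n - k)
      = (f + k).choose f * ((n - 1 - f) + (p - n - k)).choose (n - 1 - f) := by
    intro k hk
    have hk : k ≤ p - n := Nat.lt_succ_iff.1 (mem_range.1 hk)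
    rw [show p - 1 - f - k = (n - 1 - f) + (p - n - k) by omega, ← Nat.choose_symm_add,
      ← Nat.choose_symm_add]
  rw [sum_congr rfl hsummand, Nat.sum_range_add_choose_mul_add_choose,
    show f + (n - 1 - f) + 1 = n by omega, show n + (p - n) = p by omega]

theorem gould_sum_indep (p n : ℕ) (hn : 1 ≤ n) (hnp : n ≤ p) :
    (∀ f k : ℕ, (f + k).choose k * k.choose k = (f + k).choose f) ∧
    (∀ f₁ f₂ : ℕ, f₁ ≤ n - 1 → f₂ ≤ n - 1 →
      ∑ k ∈ Finset.range (p - n + 1),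
        (f₁ + k).choose k * (p - 1 - f₁ - k).choose (p - n - k)
      = ∑ k ∈ Finset.range (p - n + 1),
        (f₂ + k).choose k * (p - 1 - f₂ - k).choose (p - n - k)) :=
  ⟨fun f k => by rw [Nat.choose_self, mul_one, Nat.choose_symm_add],
    fun _ _ h₁ h₂ => by rw [gould_sum_eq_choose hn hnp h₁, gould_sum_eq_choose hn hnp h₂]⟩
end

section
/- Let p ≥ 1 and let v : Finset(range p) → ℝ be a cooperative game value function. Define the Shapley value of player j as φ(j) = (1/p) * Σ over subsets F of {0,...,p-1}\{j} of (C(p-1, |F|))⁻¹ * (v(F ∪ {j}) - v(F)). Then the sum over all j of φ(j) equals v(full set) - v(∅). -/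
/-!
Group the double sum by coalition `S ⊆ N`, `p = #N`. The value `v S` is counted once for each
`j ∈ S` (as `v (insert j F)` with weight `w (#S - 1)`) and once for each `j ∉ S` (as `v F` with
weight `w #S`), where `w k = (p * (p - 1).choose k)⁻¹`. Both multiplicities `#S * w (#S - 1)` and
`(p - #S) * w #S` equal `(p.choose #S)⁻¹`, except that the first vanishes at `S = ∅` and the second
at `S = N`. Hence all terms cancel except `v N - v ∅`.
-/

open Finset

theorem card_mul_inv_mul_choose_pred {p k : ℕ} (hk : 0 < k) (hkp : k ≤ p) :
    (k : ℝ) * ((p : ℝ) * (p - 1).choose (k - 1))⁻¹ = ((p.choose k : ℕ) : ℝ)⁻¹ := by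
  obtain ⟨k, rfl⟩ := Nat.exists_eq_add_of_lt hk
  obtain ⟨n, rfl⟩ := Nat.exists_eq_add_of_le' (hk.trans_le hkp)
  simp only [zero_add, Nat.succ_eq_add_one, Nat.add_sub_cancel]
  rw [← Nat.cast_mul, Nat.add_one_mul_choose_eq, Nat.cast_mul, mul_inv_rev,
    mul_inv_cancel_left₀ (by positivity)]

theorem card_sdiff_mul_inv_mul_choose {p k : ℕ} (hkp : k < p) :
    ((p - k : ℕ) : ℝ) * ((p : ℝ) * (p - 1).choose k)⁻¹ = ((p.choose k : ℕ) : ℝ)⁻¹ := by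
  obtain ⟨n, rfl⟩ := Nat.exists_eq_add_of_le' ((Nat.zero_le k).trans_lt hkp)
  simp only [Nat.succ_eq_add_one, zero_add, Nat.add_sub_cancel]
  rw [← Nat.cast_mul, Nat.mul_comm, Nat.choose_mul_succ_eq, Nat.cast_mul, mul_inv_rev,
    mul_inv_cancel_left₀ (by norm_cast; omega)]

section DoubleCounting

variable {α M : Type*} [DecidableEq α] [AddCommMonoid M] (N : Finset α)

theorem sum_sum_powerset_erase (g : Finset α → M) :
    ∑ j ∈ N, ∑ F ∈ (N.erase j).powerset, g F = ∑ S ∈ N.powerset, (N.card - S.card) • g S := by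
  rw [sum_comm' (t' := N.powerset) (s' := fun S => N \ S)]
  · refine sum_congr rfl fun S hS => ?_
    rw [sum_const, card_sdiff_of_subset (mem_powerset.mp hS)]
  · intro j S
    simp only [mem_powerset, subset_erase, mem_sdiff]
    tauto

theorem sum_sum_powerset_erase_insert (f : ℕ → Finset α → M) :
    ∑ j ∈ N, ∑ F ∈ (N.erase j).powerset, f F.card (insert j F) =
      ∑ S ∈ N.powerset, S.card • f (S.card - 1) S := by
  have hreindex : ∀ j ∈ N, ∑ F ∈ (N.erase j).powerset, f F.card (insert j F) =
      ∑ S ∈ N.powerset with j ∈ S, f (S.card - 1) S := by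
    intro j hj
    refine sum_nbij' (insert j) (erase · j) ?_ ?_ ?_ ?_ ?_
    · intro F hF
      simp only [mem_powerset, subset_erase] at hF
      simp [insert_subset hj hF.1]
    · intro S hS
      simp only [mem_filter, mem_powerset] at hS
      simp [erase_subset_erase j hS.1]
    · intro F hF
      simp only [mem_powerset, subset_erase] at hF
      exact erase_insert hF.2
    · intro S hS
      simp only [mem_filter, mem_powerset] at hS
      exact insert_erase hS.2
    · intro F hF
      simp only [mem_powerset, subset_erase] at hF
      rw [card_insert_of_notMem hF.2, Nat.add_sub_cancel]
  rw [sum_congr rfl hreindex, sum_comm' (t' := N.powerset) (s' := id)]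
  · simp only [id, sum_const]
  · intro j S
    simp only [mem_filter, mem_powerset, id_eq]
    tauto

end DoubleCounting

section Shapley

variable {α : Type*} [DecidableEq α]

noncomputable def shapleyValue (N : Finset α) (v : Finset α → ℝ) (j : α) : ℝ :=
  (1 / (N.card : ℝ)) * ∑ F ∈ (N.erase j).powerset,
    (((N.card - 1).choose F.card : ℝ))⁻¹ * (v (insert j F) - v F)

theorem sum_shapleyValue (N : Finset α) (v : Finset α → ℝ) :
    ∑ j ∈ N, shapleyValue N v j = v N - v ∅ := by
  set p := N.card
  set w : ℕ → ℝ := fun k => ((p : ℝ) * (p - 1).choose k)⁻¹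
  set c : Finset α → ℝ := fun S => ((p.choose S.card : ℕ) : ℝ)⁻¹ * v S
  have hsplit : ∀ j, shapleyValue N v j =
      ∑ F ∈ (N.erase j).powerset, w F.card * v (insert j F) -
        ∑ F ∈ (N.erase j).powerset, w F.card * v F := by
    intro j
    rw [shapleyValue, mul_sum, ← sum_sub_distrib]
    refine sum_congr rfl fun F _ => ?_
    simp only [w, mul_inv]
    ring
  have hjoin :
      ∑ S ∈ N.powerset, S.card • (w (S.card - 1) * v S) = ∑ S ∈ N.powerset.erase ∅, c S := by
    rw [← sum_erase (a := ∅) _ (by simp)]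
    refine sum_congr rfl fun S hS => ?_
    obtain ⟨hne, hSN⟩ := mem_erase.1 hS
    rw [nsmul_eq_mul, ← mul_assoc, card_mul_inv_mul_choose_pred
      (card_pos.2 (nonempty_iff_ne_empty.2 hne)) (card_le_card (mem_powerset.1 hSN))]
  have hleave :
      ∑ S ∈ N.powerset, (p - S.card) • (w S.card * v S) = ∑ S ∈ N.powerset.erase N, c S := by
    rw [← sum_erase (a := N) _ (by simp [p])]
    refine sum_congr rfl fun S hS => ?_
    obtain ⟨hne, hSN⟩ := mem_erase.1 hS
    rw [nsmul_eq_mul, ← mul_assoc, card_sdiff_mul_inv_mul_choose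
      (card_lt_card (ssubset_of_subset_of_ne (mem_powerset.1 hSN) hne))]
  simp only [hsplit, sum_sub_distrib]
  rw [sum_sum_powerset_erase_insert N (fun k S => w k * v S), sum_sum_powerset_erase, hjoin,
    hleave, sum_erase_eq_sub (empty_mem_powerset N), sum_erase_eq_sub (mem_powerset_self N)]
  simp [c, p]

end Shapley

theorem shapley_efficiency_general (p : ℕ) (v : Finset ℕ → ℝ) :
    ∑ j ∈ Finset.range p,
      (1 / (p : ℝ)) * ∑ F ∈ ((Finset.range p).erase j).powerset,
        (((p - 1).choose F.card : ℝ))⁻¹ * (v (insert j F) - v F)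
    = v (Finset.range p) - v ∅ := by
  simpa [shapleyValue] using sum_shapleyValue (range p) v

theorem shapley_efficiency (p : ℕ) (hp : 1 ≤ p) (v : Finset ℕ → ℝ) :
    ∑ j ∈ Finset.range p,
      (1 / (p : ℝ)) * ∑ F ∈ ((Finset.range p).erase j).powerset,
        (((p - 1).choose F.card : ℝ))⁻¹ * (v (insert j F) - v F)
    = v (Finset.range p) - v ∅ :=
  shapley_efficiency_general p v
end

section
/- Let P = {0, 1, ..., p-1}, j ∈ P, and let w : P → ℝ be a weight function with w(k) = 1 for all k outside a subset S ⊆ P containing j, with |S| = m ≥ 1. Then (1/p) * Σ over F ⊆ P\{j} of C(p-1,|F|)⁻¹ * (w(j) - 1) * Π_{k∈F} w(k) equals (1/m) * Σ over F ⊆ S\{j} of C(m-1,|F|)⁻¹ * (w(j) - 1) * Π_{k∈F} w(k). -/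
/-!
The Shapley weight `((n + 1) * C(n, k))⁻¹ = ∫₀¹ xᵏ (1 - x)ⁿ⁻ᵏ dx` of a coalition of size `k`
is the sum of the weights of sizes `k` and `k + 1` once one more player is present. So adjoining a
player `x` with `w x = 1` leaves the weighted sum unchanged, as `F` and `insert x F` carry the same
product; removing the players outside `S` one at a time gives the reduction.
-/

open Finset

theorem inv_succ_mul_choose_eq_add (n k : ℕ) (hk : k ≤ n) :
    ((n + 1 : ℝ) * n.choose k)⁻¹
      = ((n + 2 : ℝ) * (n + 1).choose k)⁻¹
        + ((n + 2 : ℝ) * (n + 1).choose (k + 1))⁻¹ := by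
  have hc : (0 : ℝ) < n.choose k := by exact_mod_cast Nat.choose_pos hk
  have hnk : (0 : ℝ) < n + 1 - k := by
    have : (k : ℝ) ≤ n := by exact_mod_cast hk
    linarith
  have h₁ : (n.choose k * (n + 1) : ℝ) = (n + 1).choose k * (n + 1 - k) := by
    rw [← Nat.cast_add_one, ← Nat.cast_sub (by omega)]
    exact_mod_cast Nat.choose_mul_succ_eq n k
  have h₂ : ((n + 1) * n.choose k : ℝ) = (n + 1).choose (k + 1) * (k + 1) := by
    exact_mod_cast Nat.add_one_mul_choose_eq n k
  have e₁ : ((n + 1).choose k : ℝ) = n.choose k * (n + 1) / (n + 1 - k) := by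
    rw [h₁]; field_simp
  have e₂ : ((n + 1).choose (k + 1) : ℝ) = (n + 1) * n.choose k / (k + 1) := by
    rw [h₂]; field_simp
  rw [e₁, e₂]
  field_simp
  ring

variable {α : Type*}

noncomputable def shapleySum (U : Finset α) (w : α → ℝ) : ℝ :=
  ∑ F ∈ U.powerset, ((#U + 1 : ℝ) * (#U).choose #F)⁻¹ * ∏ k ∈ F, w k

theorem one_div_mul_sum_inv_choose_eq_mul_shapleySum {U : Finset α} {n : ℕ} (hn : #U + 1 = n)
    (c : ℝ) (w : α → ℝ) :
    1 / (n : ℝ) * ∑ F ∈ U.powerset, (((n - 1).choose #F : ℝ))⁻¹ * c * ∏ k ∈ F, w k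
      = c * shapleySum U w := by
  subst hn
  rw [shapleySum, Nat.add_sub_cancel, mul_sum, mul_sum]
  refine sum_congr rfl fun F _ => ?_
  push_cast
  field_simp

section DecidableEq

variable [DecidableEq α]

theorem shapleySum_insert_of_eq_one {U : Finset α} {x : α} (hx : x ∉ U) {w : α → ℝ}
    (hwx : w x = 1) : shapleySum (insert x U) w = shapleySum U w := by
  rw [shapleySum, sum_powerset_insert hx, ← sum_add_distrib, shapleySum, card_insert_of_notMem hx]
  refine sum_congr rfl fun F hF => ?_
  have hFU : F ⊆ U := mem_powerset.mp hF
  have hxF : x ∉ F := fun h => hx (hFU h)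
  rw [card_insert_of_notMem hxF, prod_insert hxF, hwx, one_mul, ← add_mul,
    inv_succ_mul_choose_eq_add _ _ (card_le_card hFU)]
  push_cast
  ring

theorem shapleySum_union_of_eq_one {U T : Finset α} (hUT : Disjoint U T) {w : α → ℝ}
    (hw : ∀ k ∈ T, w k = 1) : shapleySum (U ∪ T) w = shapleySum U w := by
  induction T using Finset.induction_on with
  | empty => rw [union_empty]
  | insert x T hxT ih =>
    rw [disjoint_insert_right] at hUT
    rw [union_insert,
      shapleySum_insert_of_eq_one (by simp [hxT, hUT.1]) (hw x (mem_insert_self x T)),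
      ih hUT.2 fun k hk => hw k (mem_insert_of_mem hk)]

end DecidableEq

theorem qshap_dimension_reduction_general (p m j : ℕ) (S : Finset ℕ) (w : ℕ → ℝ)
    (hS : S ⊆ Finset.range p) (hj : j ∈ S) (hcard : S.card = m)
    (hw : ∀ k ∈ Finset.range p, k ∉ S → w k = 1) :
    (1 / (p : ℝ)) * ∑ F ∈ ((Finset.range p).erase j).powerset,
      (((p - 1).choose F.card : ℝ))⁻¹ * (w j - 1) * ∏ k ∈ F, w k
    = (1 / (m : ℝ)) * ∑ F ∈ (S.erase j).powerset,
      (((m - 1).choose F.card : ℝ))⁻¹ * (w j - 1) * ∏ k ∈ F, w k := by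
  have hjp : j ∈ range p := hS hj
  have hsplit : (range p).erase j = S.erase j ∪ (range p \ S) := by
    ext k
    have := @hS k
    grind
  have hdisj : Disjoint (S.erase j) (range p \ S) :=
    disjoint_sdiff.mono_left (erase_subset j S)
  rw [one_div_mul_sum_inv_choose_eq_mul_shapleySum (by grind [card_erase_of_mem, card_range]),
    one_div_mul_sum_inv_choose_eq_mul_shapleySum (by grind [card_erase_of_mem]), hsplit,
    shapleySum_union_of_eq_one hdisj fun k hk => hw k (mem_sdiff.mp hk).1 (mem_sdiff.mp hk).2]

theorem qshap_dimension_reduction (p m j : ℕ) (S : Finset ℕ) (w : ℕ → ℝ)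
    (hS : S ⊆ Finset.range p) (hj : j ∈ S) (hcard : S.card = m) (hm : 1 ≤ m)
    (hw : ∀ k ∈ Finset.range p, k ∉ S → w k = 1) :
    (1 / (p : ℝ)) * ∑ F ∈ ((Finset.range p).erase j).powerset,
      (((p - 1).choose F.card : ℝ))⁻¹ * (w j - 1) * ∏ k ∈ F, w k
    = (1 / (m : ℝ)) * ∑ F ∈ (S.erase j).powerset,
      (((m - 1).choose F.card : ℝ))⁻¹ * (w j - 1) * ∏ k ∈ F, w k :=
  qshap_dimension_reduction_general p m j S w hS hj hcard hw
end
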